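/- Let S be the RNA sequence corresponding to a labelled dotted rooted tree. Then any two adjacent positions of S read dots of tree vertices whose heights either are equal or differ by exactly one. -/

import Mathlib

/- A dotted (ordered, plane) rooted tree: `leaf1` is a one-dot leaf, `node f` is a
two-dot vertex with ordered forest of children `f`.  A dotted *rooted* tree in the
sense of the paper is a tree of the form `DTree.node f` (the root carries two dots). -/
mutual
inductive DTree : Type
  | leaf1 : DTree
  | node  : DForest → DTree
inductive DForest : Type
  | nil  : DForest
  | cons : DTree → DForest → DForest
end

/- Total number of dots. -/
mutual
def DTree.size : DTree → ℕ
  | DTree.leaf1 => 1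
  | DTree.node f => 2 + DForest.size f
def DForest.size : DForest → ℕ
  | DForest.nil => 0
  | DForest.cons t f => DTree.size t + DForest.size f
end

/- Arcs of the corresponding secondary structure, positions assigned in the order of
the traversal that visits each two-dot vertex once before and once after its children
(left to right) and each one-dot leaf once; `off` is the next position to assign. -/
mutual
def DTree.arcs : DTree → ℕ → List (ℕ × ℕ)
  | DTree.leaf1, _ => []
  | DTree.node f, off => (off, off + DForest.size f + 1) :: DForest.arcs f (off + 1)
def DForest.arcs : DForest → ℕ → List (ℕ × ℕ)
  | DForest.nil, _ => []
  | DForest.cons t f, off => DTree.arcs t off ++ DForest.arcs f (off + DTree.size t)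
end

/-- The secondary structure (on `{1,…,size}`) corresponding to a dotted tree. -/
def DTree.secStruct (t : DTree) : Finset (ℕ × ℕ) := (DTree.arcs t 1).toFinset

/- Heights of the tree vertices whose dots are read at successive positions of the
traversal, the root subtree starting at height `h`. -/
mutual
def DTree.heights : DTree → ℕ → List ℕ
  | DTree.leaf1, h => [h]
  | DTree.node f, h => h :: (DForest.heights f (h + 1) ++ [h])
def DForest.heights : DForest → ℕ → List ℕ
  | DForest.nil, _ => []
  | DForest.cons t f, h => DTree.heights t h ++ DForest.heights f h
end

/-!
Strengthen the claim by induction: the heights read along a subtree, or a forest, rooted at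
height `h` begin and end at `h`. A two-dot vertex at height `h` reads `h`, then its children's
sequences, which begin and end at `h + 1`, then `h` again; so every junction of two pieces
joins heights that are equal or one apart.
-/

def WithinOne (a b : ℕ) : Prop := a = b ∨ a = b + 1 ∨ b = a + 1

def IsClosedWalkAt (h : ℕ) (l : List ℕ) : Prop :=
  l.IsChain WithinOne ∧ (∀ x ∈ l.head?, x = h) ∧ (∀ x ∈ l.getLast?, x = h)

namespace IsClosedWalkAt

theorem nil (h : ℕ) : IsClosedWalkAt h [] := by
  simp [IsClosedWalkAt]

theorem singleton (h : ℕ) : IsClosedWalkAt h [h] := by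
  simp [IsClosedWalkAt]

theorem append {h : ℕ} {l₁ l₂ : List ℕ} (h₁ : IsClosedWalkAt h l₁) (h₂ : IsClosedWalkAt h l₂) :
    IsClosedWalkAt h (l₁ ++ l₂) := by
  obtain ⟨chain₁, head₁, last₁⟩ := h₁
  obtain ⟨chain₂, head₂, last₂⟩ := h₂
  refine ⟨chain₁.append chain₂ fun x hx y hy => Or.inl ((last₁ x hx).trans (head₂ y hy).symm),
    ?_, ?_⟩
  · cases l₁ <;> simp_all
  · cases l₂ using List.reverseRecOn <;> simp_all

theorem cons_append_singleton {h : ℕ} {l : List ℕ} (hl : IsClosedWalkAt (h + 1) l) :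
    IsClosedWalkAt h (h :: (l ++ [h])) := by
  obtain ⟨chain, head, last⟩ := hl
  refine ⟨List.IsChain.cons ?_ ?_, by simp, by simp [List.getLast?_cons]⟩
  · exact chain.append (.singleton h) fun x hx y hy => by simp_all [WithinOne]
  · intro y hy
    cases l <;> simp_all [WithinOne]

end IsClosedWalkAt

mutual
theorem DTree.isClosedWalkAt_heights : ∀ (t : DTree) (h : ℕ), IsClosedWalkAt h (t.heights h)
  | .leaf1, h => .singleton h
  | .node f, h => by
    rw [DTree.heights]
    exact (DForest.isClosedWalkAt_heights f (h + 1)).cons_append_singleton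
theorem DForest.isClosedWalkAt_heights : ∀ (f : DForest) (h : ℕ), IsClosedWalkAt h (f.heights h)
  | .nil, h => .nil h
  | .cons t f, h => by
    rw [DForest.heights]
    exact (DTree.isClosedWalkAt_heights t h).append (DForest.isClosedWalkAt_heights f h)
end

/-- In the sequence corresponding to a (labelled) dotted rooted tree,
any two adjacent positions read dots of vertices whose heights are equal or differ by
exactly one. -/
theorem adjacent_heights (f : DForest) (i : ℕ)
    (hi : i + 1 < (DTree.heights (DTree.node f) 0).length) :
    (DTree.heights (DTree.node f) 0).getD i 0 =
        (DTree.heights (DTree.node f) 0).getD (i + 1) 0 ∨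
    (DTree.heights (DTree.node f) 0).getD i 0 =
        (DTree.heights (DTree.node f) 0).getD (i + 1) 0 + 1 ∨
    (DTree.heights (DTree.node f) 0).getD (i + 1) 0 =
        (DTree.heights (DTree.node f) 0).getD i 0 + 1 := by
  have chain := (DTree.isClosedWalkAt_heights (.node f) 0).1
  rw [List.isChain_iff_getElem] at chain
  simp only [List.getD_eq_getElem?_getD, List.getElem?_eq_getElem hi,
    List.getElem?_eq_getElem (Nat.lt_of_succ_lt hi), Option.getD_some]
  exact chain i hi
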